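/- arXiv:2004.02530 — 5 statements merged into one kernel-verified Lean document; each statement's English description precedes it below -/
import Mathlib

section
/- Let a > 0 be a real number and let T : ℕ → ℝ be a function such that T(f) ≤ a for all f ≤ 1, and such that for every f ≥ 2 there exist natural numbers f₁, f₂, f₃ with f₁ + f₂ + f₃ = f − 1 and T(f) ≤ a·(1 + min{f₁, f₂, f₃}) + T(f₁) + T(f₂) + T(f₃). Then T(f) ≤ a·(2f + 1 + f·log₃ f) for all f ≥ 1 (where log₃ denotes the base-3 logarithm, with the convention log₃ 0 = 0). -/
lemma mono_log_aux (fi f : ℕ) (hle : fi ≤ f) (hf : 1 ≤ f) :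
    (fi : ℝ) * Real.logb 3 fi ≤ (fi : ℝ) * Real.logb 3 f := by
  rcases Nat.eq_zero_or_pos fi with h | h
  · simp [h]
  · apply mul_le_mul_of_nonneg_left _ (by positivity)
    have : (0:ℝ) < fi := by positivity
    exact Real.logb_le_logb_of_le (by norm_num) this (by exact_mod_cast hle)

lemma key_log_aux (f fi : ℕ) (hfi : 3 * fi ≤ f) :
    (fi : ℝ) * Real.logb 3 fi ≤ (fi : ℝ) * Real.logb 3 f - fi := by
  rcases Nat.eq_zero_or_pos fi with h | h
  · simp [h]
  · have hfi' : (0:ℝ) < fi := by positivity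
    have h1 : Real.logb 3 (3 * fi) ≤ Real.logb 3 f := by
      have h0 : (0:ℝ) < 3 * (fi:ℝ) := by positivity
      exact Real.logb_le_logb_of_le (by norm_num) h0 (by push_cast; exact_mod_cast hfi)
    have h2 : Real.logb 3 ((3:ℝ) * fi) = 1 + Real.logb 3 fi := by
      rw [Real.logb_mul (by norm_num) (ne_of_gt hfi'), Real.logb_self_eq_one] <;> norm_num
    push_cast at h1
    rw [h2] at h1
    nlinarith

theorem nlogn_recurrence_bound (a : ℝ) (ha : 0 < a) (T : ℕ → ℝ)
    (hbase : ∀ f : ℕ, f ≤ 1 → T f ≤ a)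
    (hrec : ∀ f : ℕ, 2 ≤ f → ∃ f₁ f₂ f₃ : ℕ, f₁ + f₂ + f₃ = f - 1 ∧
      T f ≤ a * (1 + min (min f₁ f₂) f₃) + T f₁ + T f₂ + T f₃) :
    ∀ f : ℕ, 1 ≤ f → T f ≤ a * (2 * f + 1 + f * Real.logb 3 f) := by
  have main : ∀ f : ℕ, T f ≤ a * (2 * f + 1 + f * Real.logb 3 f) := by
    intro f
    induction f using Nat.strong_induction_on with
    | _ f ih =>
      by_cases hle1 : f ≤ 1
      · have hT := hbase f hle1
        interval_cases f <;> simp <;> nlinarith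
      · by_cases hf2 : f = 2
        · subst hf2
          obtain ⟨f₁, f₂, f₃, hsum, hT⟩ := hrec 2 le_rfl
          have hmin : min (min f₁ f₂) f₃ = 0 := by omega
          have h1 := hbase f₁ (by omega)
          have h2 := hbase f₂ (by omega)
          have h3 := hbase f₃ (by omega)
          have hlog : 0 ≤ Real.logb 3 2 := Real.logb_nonneg (by norm_num) (by norm_num)
          rw [hmin] at hT
          push_cast at hT ⊢
          nlinarith
        · have hf3 : 3 ≤ f := by omega
          obtain ⟨f₁, f₂, f₃, hsum, hT⟩ := hrec f (by omega)
          set m := min (min f₁ f₂) f₃ with hm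
          have ih1 := ih f₁ (by omega)
          have ih2 := ih f₂ (by omega)
          have ih3 := ih f₃ (by omega)
          have hsum' : (f₁ : ℝ) + f₂ + f₃ = (f : ℝ) - 1 := by
            have : f₁ + f₂ + f₃ + 1 = f := by omega
            push_cast [← this]; ring
          have L1 : 1 ≤ Real.logb 3 f := by
            have : Real.logb 3 ((3:ℕ):ℝ) ≤ Real.logb 3 f :=
              Real.logb_le_logb_of_le (by norm_num) (by norm_num) (by exact_mod_cast hf3)
            simpa [Real.logb_self_eq_one] using this
          have hkey : (f₁:ℝ) * Real.logb 3 f₁ + f₂ * Real.logb 3 f₂ + f₃ * Real.logb 3 f₃ ≤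
              (f₁:ℝ) * Real.logb 3 f + f₂ * Real.logb 3 f + f₃ * Real.logb 3 f - m := by
            have hcase : m = f₁ ∨ m = f₂ ∨ m = f₃ := by omega
            rcases hcase with h | h | h
            · have k := key_log_aux f f₁ (by omega)
              have m2 := mono_log_aux f₂ f (by omega) (by omega)
              have m3 := mono_log_aux f₃ f (by omega) (by omega)
              have : (m:ℝ) = f₁ := by exact_mod_cast congrArg Nat.cast h
              linarith
            · have k := key_log_aux f f₂ (by omega)
              have m2 := mono_log_aux f₁ f (by omega) (by omega)
              have m3 := mono_log_aux f₃ f (by omega) (by omega)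
              have : (m:ℝ) = f₂ := by exact_mod_cast congrArg Nat.cast h
              linarith
            · have k := key_log_aux f f₃ (by omega)
              have m2 := mono_log_aux f₁ f (by omega) (by omega)
              have m3 := mono_log_aux f₂ f (by omega) (by omega)
              have : (m:ℝ) = f₃ := by exact_mod_cast congrArg Nat.cast h
              linarith
          have hS : (1 + (m:ℝ)) + (2*f₁+1+f₁*Real.logb 3 f₁) + (2*f₂+1+f₂*Real.logb 3 f₂)
              + (2*f₃+1+f₃*Real.logb 3 f₃) ≤ 2*f+1+f*Real.logb 3 f := by
            have hexp : (f₁:ℝ) * Real.logb 3 f + f₂ * Real.logb 3 f + f₃ * Real.logb 3 f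
                = (f:ℝ) * Real.logb 3 f - Real.logb 3 f := by
              linear_combination Real.logb 3 f * hsum'
            linarith
          have := mul_le_mul_of_nonneg_left hS ha.le
          nlinarith
  exact fun f _ => main f
end

section
/- Let f ≥ 2 be a natural number and let f₁, f₂, f₃ be natural numbers with f₁ + f₂ + f₃ = f − 1, and let m = min{f₁, f₂, f₃}. Then m + f₁·log₃ f₁ + f₂·log₃ f₂ + f₃·log₃ f₃ ≤ (f − 1)·log₃ f, where log₃ denotes the base-3 logarithm with the convention 0·log₃ 0 = 0. -/
lemma term_bd (n f : ℕ) (hn : n ≤ f) (hf : 1 ≤ f) :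
    (n : ℝ) * Real.logb 3 n ≤ n * Real.logb 3 f := by
  rcases Nat.eq_zero_or_pos n with h | h
  · simp [h]
  · apply mul_le_mul_of_nonneg_left _ (by positivity)
    have h0 : (0:ℝ) < n := by exact_mod_cast h
    gcongr
    all_goals first | exact_mod_cast hn | norm_num

lemma min_term_bd (n f : ℕ) (hn : 3 * n ≤ f) (hf : 1 ≤ f) :
    (n : ℝ) + n * Real.logb 3 n ≤ n * Real.logb 3 f := by
  rcases Nat.eq_zero_or_pos n with h | h
  · simp [h]
  · have hn0 : (0 : ℝ) < n := by exact_mod_cast h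
    have h3 : Real.logb 3 ((3 : ℝ) * n) = 1 + Real.logb 3 n := by
      rw [Real.logb_mul (by norm_num) (by positivity)]
      simp [Real.logb_self_eq_one]
    have hle : Real.logb 3 ((3 : ℝ) * n) ≤ Real.logb 3 f := by
      gcongr
      all_goals first | exact_mod_cast hn | norm_num
    rw [h3] at hle
    nlinarith [mul_le_mul_of_nonneg_left hle hn0.le]

lemma core (a b c f : ℕ) (hf : 2 ≤ f) (hsum : a + b + c = f - 1)
    (hab : a ≤ b) (hac : a ≤ c) :
    (a : ℝ) + a * Real.logb 3 a + b * Real.logb 3 b + c * Real.logb 3 c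
      ≤ (f - 1 : ℕ) * Real.logb 3 f := by
  have hf1 : 1 ≤ f := by omega
  have H1 := min_term_bd a f (by omega) hf1
  have H2 := term_bd b f (by omega) hf1
  have H3 := term_bd c f (by omega) hf1
  have : ((f - 1 : ℕ) : ℝ) = (a : ℝ) + b + c := by
    rw [← hsum]; push_cast; ring
  rw [this]
  nlinarith

theorem min_log_inequality (f f₁ f₂ f₃ : ℕ) (hf : 2 ≤ f)
    (hsum : f₁ + f₂ + f₃ = f - 1) :
    (min (min f₁ f₂) f₃ : ℝ) + f₁ * Real.logb 3 f₁ + f₂ * Real.logb 3 f₂ +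
      f₃ * Real.logb 3 f₃ ≤ (f - 1 : ℕ) * Real.logb 3 f := by
  have key : ∀ k : ℕ, min (min f₁ f₂) f₃ = k →
      ((k : ℝ) + f₁ * Real.logb 3 f₁ + f₂ * Real.logb 3 f₂ +
      f₃ * Real.logb 3 f₃ ≤ (f - 1 : ℕ) * Real.logb 3 f) →
      (min (min f₁ f₂) f₃ : ℝ) + f₁ * Real.logb 3 f₁ + f₂ * Real.logb 3 f₂ +
      f₃ * Real.logb 3 f₃ ≤ (f - 1 : ℕ) * Real.logb 3 f := by
    intro k hk h
    have : ((min (min f₁ f₂) f₃ : ℕ) : ℝ) = (k : ℝ) := by rw [hk]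
    push_cast at this
    rw [this]; exact h
  rcases Nat.le_total f₁ f₂ with h12 | h12
  · rcases Nat.le_total f₁ f₃ with h13 | h13
    · exact key f₁ (by omega) (by have := core f₁ f₂ f₃ f hf hsum h12 h13; linarith)
    · exact key f₃ (by omega) (by have := core f₃ f₁ f₂ f hf (by omega) h13 (by omega); linarith)
  · rcases Nat.le_total f₂ f₃ with h23 | h23
    · exact key f₂ (by omega) (by have := core f₂ f₁ f₃ f hf (by omega) h12 h23; linarith)
    · exact key f₃ (by omega) (by have := core f₃ f₁ f₂ f hf (by omega) (by omega) h23; linarith)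
end

section
/- Let T : ℕ → ℝ be a function with T(L) ≤ 0 for all L ≤ 1, and such that for every L ≥ 2 there exists a natural number k with 1 ≤ k ≤ L − 1 and T(L) ≤ min{k, L − k} + T(k) + T(L − k). Then T(L) ≤ L·log₂ L for all L ≥ 1, where log₂ denotes the base-2 logarithm. -/
lemma key_split_ineq (a b : ℝ) (ha : 1 ≤ a) (hab : a ≤ b) :
    a + a * Real.logb 2 a + b * Real.logb 2 b ≤ (a + b) * Real.logb 2 (a + b) := by
  have hb : 1 ≤ b := le_trans ha hab
  have ha0 : 0 < a := by linarith
  have hb0 : 0 < b := by linarith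
  have h2a : Real.logb 2 (2 * a) = 1 + Real.logb 2 a := by
    rw [Real.logb_mul (by norm_num) (ne_of_gt ha0), Real.logb_self_eq_one] <;> norm_num
  have h1 : Real.logb 2 (2 * a) ≤ Real.logb 2 (a + b) := by
    gcongr <;> [norm_num; linarith]
  have h2 : Real.logb 2 b ≤ Real.logb 2 (a + b) := by
    gcongr <;> [norm_num; linarith]
  have h3 : Real.logb 2 a ≤ Real.logb 2 (a + b) - 1 := by linarith [h2a ▸ h1]
  nlinarith [mul_le_mul_of_nonneg_left h3 (le_of_lt ha0),
    mul_le_mul_of_nonneg_left h2 (le_of_lt hb0)]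

theorem smaller_half_recurrence_bound (T : ℕ → ℝ)
    (hbase : ∀ L : ℕ, L ≤ 1 → T L ≤ 0)
    (hrec : ∀ L : ℕ, 2 ≤ L → ∃ k : ℕ, 1 ≤ k ∧ k ≤ L - 1 ∧
      T L ≤ min k (L - k) + T k + T (L - k)) :
    ∀ L : ℕ, 1 ≤ L → T L ≤ L * Real.logb 2 L := by
  intro L
  induction L using Nat.strong_induction_on with
  | _ L ih =>
  intro hL
  rcases le_or_gt L 1 with h1 | h2
  · have hT := hbase L h1
    have hL1 : L = 1 := le_antisymm h1 hL
    subst hL1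
    simp [hT]
  · obtain ⟨k, hk1, hk2, hT⟩ := hrec L h2
    set j := L - k with hj
    have hkltL : k < L := by omega
    have hj1 : 1 ≤ j := by omega
    have hjlt : j < L := by omega
    have hkj : k + j = L := by omega
    have ihk : T k ≤ k * Real.logb 2 k := ih k hkltL hk1
    have ihj : T j ≤ j * Real.logb 2 j := ih j hjlt hj1
    have hcast : (L : ℝ) = (k : ℝ) + (j : ℝ) := by exact_mod_cast hkj.symm
    rcases le_total k j with hle | hle
    · have hmin : min k j = k := min_eq_left hle
      have hkey := key_split_ineq (k : ℝ) (j : ℝ) (by exact_mod_cast hk1)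
        (by exact_mod_cast hle)
      rw [hcast]
      calc T L ≤ min k j + T k + T j := hT
        _ ≤ (k : ℝ) + k * Real.logb 2 k + j * Real.logb 2 j := by
            rw [hmin]; linarith
        _ ≤ _ := hkey
    · have hmin : min k j = j := min_eq_right hle
      have hkey := key_split_ineq (j : ℝ) (k : ℝ) (by exact_mod_cast hj1)
        (by exact_mod_cast hle)
      rw [hcast]
      calc T L ≤ min k j + T k + T j := hT
        _ ≤ (j : ℝ) + j * Real.logb 2 j + k * Real.logb 2 k := by
            rw [hmin]; linarith
        _ ≤ ((j : ℝ) + k) * Real.logb 2 ((j : ℝ) + k) := hkey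
        _ = _ := by ring_nf
end

section
/- Let T be a finite tree (a connected acyclic simple graph), let r be a vertex of T, and let p be a closed walk from r to r in which every dart of T appears exactly once. Let v₁, v₂, …, v_{2n−1} be the sequence of vertices visited by p (so v₁ = v_{2n−1} = r), and for each vertex v let i_v := min{i : v_i = v} and j_v := max{j : v_j = v}. Then for all vertices u and v, the vertex v lies on the unique path in T from u to r if and only if i_v ≤ i_u and j_u ≤ j_v. -/
/-!
For `v ≠ r` let `w` be the parent of `v`, the next vertex on its path to `r`. The descendants of
`v` (the vertices whose path to `r` passes through `v`) are joined to the rest of the tree only by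
the edge `vw`. The tour starts and ends at `r`, outside them, and uses each of the darts `(w, v)`
and `(v, w)` exactly once, so it visits the descendants in one contiguous block: its support is
`A ++ B ++ C` where `B` consists of descendants and begins and ends with `v`, while `A` and `C`
contain none. Thus `v` first occurs right after `A` and last occurs right before `C`, and a vertex
is a descendant iff it occurs neither in `A` nor in `C`, i.e. iff its first and last occurrences
lie between those of `v`.
-/

/-- The index of the first occurrence of `v` in the list `l`. -/
def firstOcc {V : Type*} [DecidableEq V] (l : List V) (v : V) : ℕ := l.idxOf v

/-- The index of the last occurrence of `v` in the list `l`. -/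
def lastOcc {V : Type*} [DecidableEq V] (l : List V) (v : V) : ℕ :=
  l.length - 1 - l.reverse.idxOf v

section Occurrences

variable {α : Type*} [DecidableEq α] {A B C : List α} {v x : α}

theorem firstOcc_append_le_iff (hv : v ∉ A) (hB : B.head? = some v) :
    firstOcc (A ++ B) v ≤ firstOcc (A ++ B) x ↔ x ∉ A := by
  obtain ⟨B, rfl⟩ := List.head?_eq_some_iff.mp hB
  have hfv : firstOcc (A ++ v :: B) v = A.length := by
    simp [firstOcc, List.idxOf_append_of_notMem hv]
  rw [hfv]
  by_cases hx : x ∈ A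
  · simpa [hx, firstOcc, List.idxOf_append_of_mem hx] using List.idxOf_lt_length_iff.mpr hx
  · simp [hx, firstOcc, List.idxOf_append_of_notMem hx]

-- For `x ∉ B ++ C` both sides hold, the truncated subtraction making `lastOcc (B ++ C) x = 0`.
theorem lastOcc_append_le_iff (hv : v ∉ C) (hB : B.getLast? = some v) :
    lastOcc (B ++ C) x ≤ lastOcc (B ++ C) v ↔ x ∉ C := by
  obtain ⟨B, rfl⟩ := List.getLast?_eq_some_iff.mp hB
  have hv' : v ∉ C.reverse := by simpa using hv
  have hrev := firstOcc_append_le_iff (B := v :: B.reverse) (x := x) hv' rfl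
  have hvC : (C.reverse ++ v :: B.reverse).idxOf v = C.length := by
    simp [List.idxOf_append_of_notMem hv']
  have hx := List.idxOf_le_length (l := C.reverse ++ v :: B.reverse) (a := x)
  simp only [firstOcc, List.mem_reverse] at hrev
  simp only [lastOcc, List.reverse_append, List.reverse_cons, List.singleton_append,
    List.append_assoc, List.length_append, List.length_reverse, List.length_cons] at hx ⊢
  rw [← hrev, hvC]
  omega

theorem mem_iff_firstOcc_le_and_lastOcc_le {S : Set α} (hA : ∀ y ∈ A, y ∉ S)
    (hB : ∀ y ∈ B, y ∈ S) (hC : ∀ y ∈ C, y ∉ S) (hhead : B.head? = some v)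
    (hlast : B.getLast? = some v) (hx : x ∈ A ++ B ++ C) :
    x ∈ S ↔ firstOcc (A ++ B ++ C) v ≤ firstOcc (A ++ B ++ C) x ∧
      lastOcc (A ++ B ++ C) x ≤ lastOcc (A ++ B ++ C) v := by
  have hvS : v ∈ S := hB v (List.mem_of_mem_head? hhead)
  rw [List.append_assoc, firstOcc_append_le_iff (fun h => hA v h hvS) (by simp [hhead]),
    ← List.append_assoc, lastOcc_append_le_iff (fun h => hC v h hvS) (by simp [hlast])]
  refine ⟨fun hxS => ⟨fun h => hA x h hxS, fun h => hC x h hxS⟩, fun ⟨hxA, hxC⟩ => hB x ?_⟩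
  simp only [List.mem_append] at hx
  tauto

end Occurrences

namespace SimpleGraph

variable {V : Type*} {G : SimpleGraph V}

namespace Walk

theorem head?_support {u v : V} (p : G.Walk u v) : p.support.head? = some u := by
  rw [← p.cons_tail_support, List.head?_cons]

theorem getLast?_support {u v : V} (p : G.Walk u v) : p.support.getLast? = some v := by
  rw [List.getLast?_eq_some_getLast p.support_ne_nil, getLast_support]

theorem exists_darts_eq_and_support_eq_of_mem_darts {u v : V} {p : G.Walk u v} {d : G.Dart}
    (hd : d ∈ p.darts) : ∃ (q₁ : G.Walk u d.fst) (q₂ : G.Walk d.snd v),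
      p.darts = q₁.darts ++ d :: q₂.darts ∧ p.support = q₁.support ++ q₂.support := by
  induction p with
  | nil => simp at hd
  | cons h q ih =>
    rcases List.mem_cons.mp hd with rfl | hd
    · exact ⟨nil, q, rfl, rfl⟩
    · obtain ⟨q₁, q₂, hdarts, hsupport⟩ := ih hd
      exact ⟨cons h q₁, q₂, by simp [hdarts], by simp [hsupport]⟩

theorem mem_support_of_forall_mem_darts {u v x : V} (p : G.Walk u v)
    (hp : ∀ d : G.Dart, d ∈ p.darts) (q : G.Walk x u) : x ∈ p.support := by
  cases q with
  | nil => exact p.start_mem_support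
  | cons h _ => exact p.dart_fst_mem_support_of_mem_darts (hp ⟨(x, _), h⟩)

theorem support_subset_of_forall_mem_darts {S : Set V} {u v : V} (p : G.Walk u v) (hu : u ∈ S)
    (hp : ∀ d ∈ p.darts, d.fst ∈ S → d.snd ∈ S) : ∀ x ∈ p.support, x ∈ S := by
  classical
  intro x hx
  by_contra hxS
  obtain ⟨d, hd, hdS, hdS'⟩ := (p.takeUntil x hx).exists_boundary_dart S hu hxS
  exact hdS' (hp d (p.darts_takeUntil_subset_darts hx hd) hdS)

theorem exists_support_eq_append_of_unique_boundary_darts {S : Set V} {u v : V}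
    (p : G.Walk u v) (hp : p.darts.Nodup) (hu : u ∉ S) (hv : v ∉ S) {din dout : G.Dart}
    (hdin : din ∈ p.darts) (hdinS : din.snd ∈ S)
    (henter : ∀ d : G.Dart, d.fst ∉ S → d.snd ∈ S → d = din)
    (hexit : ∀ d : G.Dart, d.fst ∈ S → d.snd ∉ S → d = dout) :
    ∃ A B C : List V, p.support = A ++ B ++ C ∧ (∀ x ∈ A, x ∉ S) ∧ (∀ x ∈ B, x ∈ S) ∧
      (∀ x ∈ C, x ∉ S) ∧ B.head? = some din.snd ∧ B.getLast? = some dout.fst := by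
  obtain ⟨q₁, q₂, hpd, hps⟩ := exists_darts_eq_and_support_eq_of_mem_darts hdin
  rw [hpd, List.nodup_middle, List.nodup_cons, List.mem_append, not_or] at hp
  obtain ⟨⟨hdin₁, hdin₂⟩, hq⟩ := hp
  obtain ⟨d, hd, hdS, hdS'⟩ := q₂.exists_boundary_dart S hdinS hv
  obtain rfl := hexit d hdS hdS'
  obtain ⟨t₁, t₂, hqd, hqs⟩ := exists_darts_eq_and_support_eq_of_mem_darts hd
  have hdout : d ∉ t₁.darts ++ t₂.darts := by
    have := hq.of_append_right
    rw [hqd, List.nodup_middle, List.nodup_cons] at this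
    exact this.1
  rw [hqd] at hdin₂
  refine ⟨q₁.support, t₁.support, t₂.support, by rw [hps, hqs, List.append_assoc], ?_, ?_, ?_,
    t₁.head?_support, t₁.getLast?_support⟩
  · refine q₁.support_subset_of_forall_mem_darts (S := Sᶜ) hu fun e he he₁ he₂ => ?_
    exact hdin₁ (henter e he₁ he₂ ▸ he)
  · refine t₁.support_subset_of_forall_mem_darts hdinS fun e he he₁ => by_contra fun he₂ => ?_
    exact hdout (List.mem_append_left _ (hexit e he₁ he₂ ▸ he))
  · refine t₂.support_subset_of_forall_mem_darts (S := Sᶜ) hdS' fun e he he₁ he₂ => ?_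
    exact hdin₂ (List.mem_append_right _ (List.mem_cons_of_mem _ (henter e he₁ he₂ ▸ he)))

end Walk

def descendants (G : SimpleGraph V) (r v : V) : Set V :=
  {x | ∃ q : G.Walk x r, q.IsPath ∧ v ∈ q.support}

namespace IsAcyclic

variable (hG : G.IsAcyclic)
include hG

theorem eq_of_isPath {u v : V} {p q : G.Walk u v} (hp : p.IsPath) (hq : q.IsPath) : p = q :=
  congrArg Subtype.val ((hG.subsingleton_path u v).elim ⟨p, hp⟩ ⟨q, hq⟩)

theorem mem_descendants_iff {r v x : V} {q : G.Walk x r} (hq : q.IsPath) :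
    x ∈ G.descendants r v ↔ v ∈ q.support :=
  ⟨fun ⟨_, hq', hv⟩ => hG.eq_of_isPath hq' hq ▸ hv, fun hv => ⟨q, hq, hv⟩⟩

-- Of two adjacent vertices, one lies on the path from the other to `r`.
theorem exists_eq_cons_or_isPath_cons {a b r : V} (hab : G.Adj a b) {q : G.Walk a r}
    (hq : q.IsPath) :
    (∃ q' : G.Walk b r, q = Walk.cons hab q') ∨ (Walk.cons hab.symm q).IsPath := by
  classical
  by_cases hb : b ∈ q.support
  · refine Or.inl ⟨q.dropUntil b hb, ?_⟩
    have htake : q.takeUntil b hb = hab.toWalk :=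
      hG.eq_of_isPath (hq.takeUntil hb) hab.isPath_toWalk
    calc q = (q.takeUntil b hb).append (q.dropUntil b hb) := (q.take_spec hb).symm
      _ = _ := by rw [htake]; rfl
  · exact Or.inr (hq.cons hb)

theorem dart_eq_of_exits_descendants {r v w : V} {c : G.Walk w r} (hvw : G.Adj v w)
    (hc : (Walk.cons hvw c).IsPath) {d : G.Dart} (hd₁ : d.fst ∈ G.descendants r v)
    (hd₂ : d.snd ∉ G.descendants r v) : d = ⟨(v, w), hvw⟩ := by
  obtain ⟨q, hq, hvq⟩ := hd₁
  rcases hG.exists_eq_cons_or_isPath_cons d.adj hq with ⟨q', rfl⟩ | hcons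
  · have hvq' : v ∉ q'.support := fun h => hd₂ ⟨q', hq.of_cons, h⟩
    obtain rfl : v = d.fst := by simpa [hvq'] using hvq
    refine Dart.ext _ _ (Prod.ext rfl ?_)
    simpa using congrArg Walk.snd (hG.eq_of_isPath hq hc)
  · exact absurd ⟨_, hcons, List.mem_cons_of_mem _ hvq⟩ hd₂

theorem dart_eq_of_enters_descendants {r v w : V} {c : G.Walk w r} (hvw : G.Adj v w)
    (hc : (Walk.cons hvw c).IsPath) {d : G.Dart} (hd₁ : d.fst ∉ G.descendants r v)
    (hd₂ : d.snd ∈ G.descendants r v) : d = ⟨(w, v), hvw.symm⟩ := by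
  rw [← d.symm_symm, hG.dart_eq_of_exits_descendants hvw hc (d := d.symm) hd₂ hd₁]
  rfl

end IsAcyclic

end SimpleGraph

theorem euler_tour_interval_labelling_general {V : Type*} [DecidableEq V]
    (T : SimpleGraph V) (hT : T.IsTree) (r : V)
    (p : T.Walk r r) (hp : p.darts.Nodup) (hall : ∀ d : T.Dart, d ∈ p.darts)
    (u v : V) (q : T.Walk u r) (hq : q.IsPath) :
    v ∈ q.support ↔
      firstOcc p.support v ≤ firstOcc p.support u ∧
        lastOcc p.support u ≤ lastOcc p.support v := by
  have hu : u ∈ p.support := p.mem_support_of_forall_mem_darts hall q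
  by_cases hvr : v = r
  · subst hvr
    simpa using mem_iff_firstOcc_le_and_lastOcc_le (A := []) (C := []) (S := Set.univ) (x := u)
      (by simp) (by simp) (by simp) p.head?_support p.getLast?_support (by simpa using hu)
  obtain ⟨_ | ⟨hvw, c⟩, hc⟩ := (hT.existsUnique_path v r).exists
  · exact absurd rfl hvr
  have hG := hT.isAcyclic
  have hr : r ∉ T.descendants r v := by
    simpa [hG.mem_descendants_iff SimpleGraph.Walk.IsPath.nil] using hvr
  obtain ⟨A, B, C, hsupp, hA, hB, hC, hhead, hlast⟩ :=
    p.exists_support_eq_append_of_unique_boundary_darts hp hr hr (hall ⟨(_, v), hvw.symm⟩)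
      ⟨_, hc, by simp⟩ (fun _ => hG.dart_eq_of_enters_descendants hvw hc)
      (fun _ => hG.dart_eq_of_exits_descendants hvw hc)
  rw [← hG.mem_descendants_iff hq, hsupp]
  exact mem_iff_firstOcc_le_and_lastOcc_le hA hB hC hhead hlast (hsupp ▸ hu)

theorem euler_tour_interval_labelling {V : Type*} [Fintype V] [DecidableEq V]
    (T : SimpleGraph V) (hT : T.IsTree) (r : V)
    (p : T.Walk r r) (hp : p.darts.Nodup) (hall : ∀ d : T.Dart, d ∈ p.darts)
    (u v : V) (q : T.Walk u r) (hq : q.IsPath) :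
    v ∈ q.support ↔
      firstOcc p.support v ≤ firstOcc p.support u ∧
        lastOcc p.support u ≤ lastOcc p.support v :=
  euler_tour_interval_labelling_general T hT r p hp hall u v q hq
end

section
/- Let T be a finite tree (a connected acyclic simple graph), let r be a vertex of T, and let p be a closed walk from r to r in which every dart of T appears exactly once. Let v₁, …, v_{2n−1} be the sequence of vertices visited by p, and for each vertex v let i_v := min{i : v_i = v} and j_v := max{j : v_j = v}. Then for any two vertices u and v, the integer intervals [i_u, j_u] and [i_v, j_v] are either nested (one contained in the other) or disjoint. -/
theorem Nat.iff_mem_Ioc_of_switches {f : ℕ → Prop} {n a b : ℕ} (hbn : b ≤ n) (h0 : ¬ f 0)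
    (ha : f (a + 1)) (hb : f b) (hb' : ¬ f (b + 1))
    (hstep : ∀ k < n, k ≠ a → k ≠ b → (f (k + 1) ↔ f k)) :
    ∀ k ≤ n, f k ↔ k ∈ Set.Ioc a b := by
  have hne : a ≠ b := by rintro rfl; exact hb' ha
  -- `a < b` only follows from `f b` once the invariant is established, so it allows `b < a`.
  have key : ∀ k ≤ n, f k ↔ a < k ∧ (k ≤ b ∨ b < a) := by
    intro k
    induction k with
    | zero => simpa using h0
    | succ k ih =>
      intro hk
      by_cases hka : k = a
      · subst hka; simp only [ha, true_iff]; omega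
      by_cases hkb : k = b
      · subst hkb; simp only [hb', false_iff]; omega
      rw [hstep k (by omega) hka hkb, ih (by omega)]
      omega
  have hlt : a < b := by have := (key b hbn).mp hb; omega
  intro k hk
  rw [key k hk, Set.mem_Ioc]
  omega

section Occurrences

variable {α : Type*} [DecidableEq α] {l : List α} {v : α}

theorem firstOcc_eq_of_getElem {i : ℕ} (hi : i < l.length) (hv : l[i] = v)
    (hmin : ∀ k (hk : k < l.length), l[k] = v → i ≤ k) : firstOcc l v = i := by
  refine (List.findIdx_eq hi).mpr ⟨by simp [hv], fun j hj => ?_⟩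
  simp only [beq_eq_false_iff_ne, ne_eq]
  exact fun h => absurd (hmin j (by omega) h) (by omega)

theorem lastOcc_eq_of_getElem {j : ℕ} (hj : j < l.length) (hv : l[j] = v)
    (hmax : ∀ k (hk : k < l.length), l[k] = v → k ≤ j) : lastOcc l v = j := by
  have hrev : firstOcc l.reverse v = l.length - 1 - j := by
    refine firstOcc_eq_of_getElem (by simp; omega) ?_ ?_
    · rw [List.getElem_reverse]; convert hv using 2; omega
    intro k hk hkv
    rw [List.getElem_reverse] at hkv
    have := hmax _ (by simp at hk; omega) hkv
    omega
  rw [lastOcc, ← firstOcc, hrev]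
  omega

end Occurrences

namespace SimpleGraph

variable {V : Type*} {G : SimpleGraph V} {u w : V}

theorem Walk.exists_getVert_of_mem_darts {p : G.Walk u w} {d : G.Dart} (hd : d ∈ p.darts) :
    ∃ i < p.length, p.getVert i = d.fst ∧ p.getVert (i + 1) = d.snd := by
  obtain ⟨i, hi, rfl⟩ := List.getElem_of_mem hd
  rw [darts_getElem_eq_getVert]
  exact ⟨i, p.length_darts ▸ hi, rfl, rfl⟩

theorem Walk.eq_of_getVert_eq_of_darts_nodup {p : G.Walk u w} (hp : p.darts.Nodup) {i j : ℕ}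
    (hi : i < p.length) (hj : j < p.length) (h₀ : p.getVert i = p.getVert j)
    (h₁ : p.getVert (i + 1) = p.getVert (j + 1)) : i = j := by
  refine (hp.getElem_inj_iff (i := i) (j := j) (hi := by simpa) (hj := by simpa)).mp ?_
  rw [darts_getElem_eq_getVert, darts_getElem_eq_getVert]
  ext <;> assumption

theorem Walk.lastOcc_support_le_length [DecidableEq V] (p : G.Walk u w) (v : V) :
    lastOcc p.support v ≤ p.length := by
  rw [lastOcc, length_support]
  omega

theorem Walk.Icc_firstOcc_lastOcc_support_eq [DecidableEq V] (p : G.Walk u w) {v : V} {i j : ℕ}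
    (hj : j ≤ p.length) (hvi : p.getVert i = v) (hvj : p.getVert j = v)
    (hbetween : ∀ k ≤ p.length, p.getVert k = v → i ≤ k ∧ k ≤ j) :
    Set.Icc (firstOcc p.support v) (lastOcc p.support v) = Set.Icc i j := by
  have hij := (hbetween j hj hvj).1
  have hlen := p.length_support
  have hget : ∀ k (hk : k < p.support.length), p.support[k] = p.getVert k := fun k hk =>
    (p.getVert_eq_support_getElem (by omega)).symm
  rw [firstOcc_eq_of_getElem (i := i) (by omega) (by rw [hget]; exact hvi)
      fun k hk hkv => (hbetween k (by omega) (hget k hk ▸ hkv)).1,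
    lastOcc_eq_of_getElem (j := j) (by omega) (by rw [hget]; exact hvj)
      fun k hk hkv => (hbetween k (by omega) (hget k hk ▸ hkv)).2]

namespace IsTree

variable {T : SimpleGraph V} (hT : T.IsTree)

noncomputable def path (u w : V) : T.Walk u w :=
  (hT.existsUnique_path u w).exists.choose

theorem isPath_path (u w : V) : (hT.path u w).IsPath :=
  (hT.existsUnique_path u w).exists.choose_spec

theorem eq_path {q : T.Walk u w} (hq : q.IsPath) : q = hT.path u w :=
  (hT.existsUnique_path u w).unique hq (hT.isPath_path u w)

def IsAncestor (r v x : V) : Prop := v ∈ (hT.path r x).support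

variable {hT} {r v x y : V}

theorem isAncestor_self (r x : V) : hT.IsAncestor r x x := Walk.end_mem_support _

theorem isAncestor_root (r x : V) : hT.IsAncestor r r x := Walk.start_mem_support _

theorem not_isAncestor_root (hv : v ≠ r) : ¬ hT.IsAncestor r v r := by
  rw [IsAncestor, ← hT.eq_path Walk.IsPath.nil]
  simpa using hv

theorem support_path_prefix [DecidableEq V] (h : hT.IsAncestor r v x) :
    (hT.path r v).support <+: (hT.path r x).support := by
  rw [← hT.eq_path ((hT.isPath_path r x).takeUntil h)]
  exact Walk.support_takeUntil_prefix_support _ h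

theorem IsAncestor.trans (hvx : hT.IsAncestor r v x) (hxy : hT.IsAncestor r x y) :
    hT.IsAncestor r v y := by
  classical
  exact (support_path_prefix hxy).subset hvx

theorem IsAncestor.total (hu : hT.IsAncestor r u x) (hv : hT.IsAncestor r v x) :
    hT.IsAncestor r u v ∨ hT.IsAncestor r v u := by
  classical
  rcases List.prefix_or_prefix_of_prefix (support_path_prefix hu) (support_path_prefix hv) with
    h | h
  · exact .inl (h.subset (isAncestor_self r u))
  · exact .inr (h.subset (isAncestor_self r v))

theorem path_eq_concat (h : T.Adj y x) (hx : ¬ hT.IsAncestor r x y) :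
    hT.path r x = (hT.path r y).concat h :=
  (hT.eq_path ((hT.isPath_path r y).concat hx h)).symm

theorem exists_adj_not_isAncestor (hv : v ≠ r) :
    ∃ w, ∃ _ : T.Adj w v, ¬ hT.IsAncestor r v w := by
  obtain ⟨w, hvw, q, hq⟩ := (hT.path r v).reverse.exists_eq_cons_of_ne hv
  have hpath := (hT.isPath_path r v).reverse
  rw [hq, Walk.cons_isPath_iff] at hpath
  refine ⟨w, hvw.symm, ?_⟩
  rw [IsAncestor, ← hT.eq_path hpath.1.reverse, Walk.support_reverse, List.mem_reverse]
  exact hpath.2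

theorem eq_of_adj_of_isAncestor_of_not_isAncestor (hw : T.Adj w v) (hvw : ¬ hT.IsAncestor r v w)
    (hxy : T.Adj x y) (hx : hT.IsAncestor r v x) (hy : ¬ hT.IsAncestor r v y) :
    x = v ∧ y = w := by
  have hxy' : ¬ hT.IsAncestor r x y := fun h => hy (hx.trans h)
  have hpx := path_eq_concat hxy.symm hxy'
  have hxv : x = v := by
    rw [IsAncestor, hpx, Walk.support_concat] at hx
    exact (List.mem_singleton.mp ((List.mem_append.mp hx).resolve_left hy)).symm
  subst hxv
  obtain ⟨rfl, -⟩ := Walk.concat_inj (hpx.symm.trans (path_eq_concat hw hvw))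
  exact ⟨rfl, rfl⟩

variable (hT) [DecidableEq V] {p : T.Walk r r}

theorem isAncestor_getVert_iff (hp : p.darts.Nodup)
    (hall : ∀ d : T.Dart, d ∈ p.darts) (v : V) {k : ℕ} (hk : k ≤ p.length) :
    hT.IsAncestor r v (p.getVert k) ↔ k ∈ Set.Icc (firstOcc p.support v) (lastOcc p.support v) := by
  by_cases hvr : v = r
  · subst hvr
    rw [p.Icc_firstOcc_lastOcc_support_eq le_rfl p.getVert_zero p.getVert_length
      fun k hk _ => ⟨k.zero_le, hk⟩]
    exact iff_of_true (isAncestor_root v _) ⟨k.zero_le, hk⟩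
  obtain ⟨w, hwv, hvw⟩ := exists_adj_not_isAncestor (hT := hT) hvr
  obtain ⟨a, ha, hwa, hva⟩ := p.exists_getVert_of_mem_darts (hall ⟨(w, v), hwv⟩)
  obtain ⟨b, hb, hvb, hwb⟩ := p.exists_getVert_of_mem_darts (hall ⟨(v, w), hwv.symm⟩)
  have hleave : ∀ k < p.length, hT.IsAncestor r v (p.getVert k) →
      ¬ hT.IsAncestor r v (p.getVert (k + 1)) → k = b := by
    intro k hk hin hout
    obtain ⟨h₀, h₁⟩ :=
      eq_of_adj_of_isAncestor_of_not_isAncestor hwv hvw (p.adj_getVert_succ hk) hin hout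
    exact p.eq_of_getVert_eq_of_darts_nodup hp hk hb (h₀.trans hvb.symm) (h₁.trans hwb.symm)
  have henter : ∀ k < p.length, hT.IsAncestor r v (p.getVert (k + 1)) →
      ¬ hT.IsAncestor r v (p.getVert k) → k = a := by
    intro k hk hin hout
    obtain ⟨h₁, h₀⟩ :=
      eq_of_adj_of_isAncestor_of_not_isAncestor hwv hvw (p.adj_getVert_succ hk).symm hin hout
    exact p.eq_of_getVert_eq_of_darts_nodup hp hk ha (h₀.trans hwa.symm) (h₁.trans hva.symm)
  have hIoc := Nat.iff_mem_Ioc_of_switches (f := fun k => hT.IsAncestor r v (p.getVert k))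
    hb.le (by simpa using not_isAncestor_root hvr) (hva ▸ isAncestor_self r v)
    (hvb ▸ isAncestor_self r v) (hwb ▸ hvw) fun k hk hka hkb =>
      ⟨fun h => by_contra fun h' => hka (henter k hk h h'),
        fun h => by_contra fun h' => hkb (hleave k hk h h')⟩
  rw [p.Icc_firstOcc_lastOcc_support_eq hb.le hva hvb
    fun k hk hkv => (hIoc k hk).mp (hkv ▸ isAncestor_self r v)]
  exact hIoc k hk

theorem Icc_subset_Icc_of_isAncestor (hp : p.darts.Nodup)
    (hall : ∀ d : T.Dart, d ∈ p.darts) (h : hT.IsAncestor r v u) :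
    Set.Icc (firstOcc p.support u) (lastOcc p.support u) ⊆
      Set.Icc (firstOcc p.support v) (lastOcc p.support v) := by
  intro k hk
  have hkp : k ≤ p.length := hk.2.trans (p.lastOcc_support_le_length u)
  exact (hT.isAncestor_getVert_iff hp hall v hkp).mp
    (h.trans ((hT.isAncestor_getVert_iff hp hall u hkp).mpr hk))

end IsTree

end SimpleGraph

theorem euler_tour_intervals_laminar_general {V : Type*} [DecidableEq V]
    (T : SimpleGraph V) (hT : T.IsTree) (r : V)
    (p : T.Walk r r) (hp : p.darts.Nodup) (hall : ∀ d : T.Dart, d ∈ p.darts)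
    (u v : V) :
    Set.Icc (firstOcc p.support u) (lastOcc p.support u) ⊆
        Set.Icc (firstOcc p.support v) (lastOcc p.support v) ∨
      Set.Icc (firstOcc p.support v) (lastOcc p.support v) ⊆
        Set.Icc (firstOcc p.support u) (lastOcc p.support u) ∨
      Disjoint (Set.Icc (firstOcc p.support u) (lastOcc p.support u))
        (Set.Icc (firstOcc p.support v) (lastOcc p.support v)) := by
  by_cases hdisj : Disjoint (Set.Icc (firstOcc p.support u) (lastOcc p.support u))
      (Set.Icc (firstOcc p.support v) (lastOcc p.support v))
  · exact .inr (.inr hdisj)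
  obtain ⟨k, hku, hkv⟩ := Set.not_disjoint_iff.mp hdisj
  have hk : k ≤ p.length := hku.2.trans (p.lastOcc_support_le_length u)
  rcases ((hT.isAncestor_getVert_iff hp hall u hk).mpr hku).total
      ((hT.isAncestor_getVert_iff hp hall v hk).mpr hkv) with h | h
  · exact .inr (.inl (hT.Icc_subset_Icc_of_isAncestor hp hall h))
  · exact .inl (hT.Icc_subset_Icc_of_isAncestor hp hall h)

theorem euler_tour_intervals_laminar {V : Type*} [Fintype V] [DecidableEq V]
    (T : SimpleGraph V) (hT : T.IsTree) (r : V)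
    (p : T.Walk r r) (hp : p.darts.Nodup) (hall : ∀ d : T.Dart, d ∈ p.darts)
    (u v : V) :
    Set.Icc (firstOcc p.support u) (lastOcc p.support u) ⊆
        Set.Icc (firstOcc p.support v) (lastOcc p.support v) ∨
      Set.Icc (firstOcc p.support v) (lastOcc p.support v) ⊆
        Set.Icc (firstOcc p.support u) (lastOcc p.support u) ∨
      Disjoint (Set.Icc (firstOcc p.support u) (lastOcc p.support u))
        (Set.Icc (firstOcc p.support v) (lastOcc p.support v)) :=
  euler_tour_intervals_laminar_general T hT r p hp hall u v
end
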